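/- arXiv:1707.06139 — 11 statements merged into one kernel-verified Lean document; each statement's English description precedes it below -/
import Mathlib

section
/- Let a : ℕ → ℝ satisfy a n ≥ 0 for all n ≥ 1, and let T n = √(a 1 + √(a 2 + ⋯ + √(a n))) denote the n-th approximant of the continued square root. Then the sequence (T n) converges to a finite limit if and only if there exists a constant C such that Real.log (a n) ≤ C * 2^n for all n ≥ 1 (i.e., limsup (log a n)/2^n < ∞). -/
open Filter Real

/-- Backward-recurrence approximant of the continued square root:
`csqrtAppr a k n = √(a k + √(a (k+1) + ⋯ + √(a n)))`, with `csqrtAppr a k n = 0` for `k > n`. -/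
noncomputable def csqrtAppr (a : ℕ → ℝ) (k n : ℕ) : ℝ :=
  if h : k > n then 0 else Real.sqrt (a k + csqrtAppr a (k + 1) n)
termination_by n + 1 - k
decreasing_by omega

/-!
The approximants `T n` increase with `n`, so they converge iff they are bounded, and the
log condition amounts to `a n ≤ K ^ 2 ^ n` with `K = exp C`. Squaring peels off one layer of the
continued root at a time; for nonnegative terms this gives `a n ≤ T n ^ 2 ^ n`, so bounded
approximants force such a `K`. Conversely, if `a j ≤ K ^ 2 ^ j` with `K ≥ 1`, then
`2 * K ^ 2 ^ k` bounds the tail root starting at `k`, because its square `4 * K ^ 2 ^ (k + 1)`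
absorbs `a k` together with the bound for the tail starting at `k + 1`.
-/

section

variable (a : ℕ → ℝ)

theorem csqrtAppr_of_lt {k n : ℕ} (h : n < k) : csqrtAppr a k n = 0 := by
  rw [csqrtAppr, dif_pos h]

theorem csqrtAppr_of_le {k n : ℕ} (h : k ≤ n) :
    csqrtAppr a k n = √(a k + csqrtAppr a (k + 1) n) := by
  rw [csqrtAppr, dif_neg (not_lt.2 h)]

theorem csqrtAppr_nonneg (k n : ℕ) : 0 ≤ csqrtAppr a k n := by
  rw [csqrtAppr]
  split_ifs <;> positivity

theorem csqrtAppr_le_succ (k n : ℕ) : csqrtAppr a k n ≤ csqrtAppr a k (n + 1) := by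
  rcases lt_or_ge n k with h | h
  · rw [csqrtAppr_of_lt a h]
    exact csqrtAppr_nonneg a k (n + 1)
  · rw [csqrtAppr_of_le a h, csqrtAppr_of_le a (h.trans n.le_succ)]
    exact sqrt_le_sqrt (add_le_add_right (csqrtAppr_le_succ (k + 1) n) _)
termination_by n + 1 - k

theorem csqrtAppr_mono (k : ℕ) : Monotone (csqrtAppr a k) :=
  monotone_nat_of_le_succ (csqrtAppr_le_succ a k)

theorem csqrtAppr_le_two_mul_pow {K : ℝ} (hK : 1 ≤ K) {k : ℕ}
    (haK : ∀ j, k ≤ j → a j ≤ K ^ 2 ^ j) (n : ℕ) : csqrtAppr a k n ≤ 2 * K ^ 2 ^ k := by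
  rcases lt_or_ge n k with h | h
  · rw [csqrtAppr_of_lt a h]
    positivity
  · have htail : csqrtAppr a (k + 1) n ≤ 2 * K ^ 2 ^ (k + 1) :=
      csqrtAppr_le_two_mul_pow hK (fun j hj => haK j (by omega)) n
    have hak : a k ≤ K ^ 2 ^ (k + 1) :=
      (haK k le_rfl).trans (pow_le_pow_right₀ hK (Nat.pow_le_pow_right two_pos k.le_succ))
    have hsq : (2 * K ^ 2 ^ k) ^ 2 = 4 * K ^ 2 ^ (k + 1) := by
      rw [mul_pow, ← pow_mul, ← pow_succ]
      norm_num
    rw [csqrtAppr_of_le a h, sqrt_le_iff, hsq]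
    exact ⟨by positivity, by linarith [one_le_pow₀ hK (n := 2 ^ (k + 1))]⟩
termination_by n + 1 - k

theorem csqrtAppr_succ_le_sq {k : ℕ} (hak : 0 ≤ a k) (n : ℕ) :
    csqrtAppr a (k + 1) n ≤ csqrtAppr a k n ^ 2 := by
  rcases lt_or_ge n k with h | h
  · rw [csqrtAppr_of_lt a (by omega : n < k + 1)]
    positivity
  · rw [csqrtAppr_of_le a h, sq_sqrt (add_nonneg hak (csqrtAppr_nonneg a _ _))]
    linarith

theorem csqrtAppr_add_le_pow {k : ℕ} (ha : ∀ i, k ≤ i → 0 ≤ a i) (n j : ℕ) :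
    csqrtAppr a (k + j) n ≤ csqrtAppr a k n ^ 2 ^ j := by
  induction j with
  | zero => simp
  | succ j ih =>
    calc csqrtAppr a (k + j + 1) n ≤ csqrtAppr a (k + j) n ^ 2 :=
          csqrtAppr_succ_le_sq a (ha _ (by omega)) n
      _ ≤ (csqrtAppr a k n ^ 2 ^ j) ^ 2 := by
          gcongr
          exact csqrtAppr_nonneg a _ _
      _ = csqrtAppr a k n ^ 2 ^ (j + 1) := by rw [← pow_mul, pow_succ]

theorem le_csqrtAppr_one_pow (ha : ∀ i, 1 ≤ i → 0 ≤ a i) {n : ℕ} (hn : 1 ≤ n) :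
    a n ≤ csqrtAppr a 1 n ^ 2 ^ n := by
  obtain ⟨m, rfl⟩ := Nat.exists_eq_add_of_le hn
  have hlast : csqrtAppr a (1 + m) (1 + m) ^ 2 = a (1 + m) := by
    rw [csqrtAppr_of_le a le_rfl, csqrtAppr_of_lt a (by omega), add_zero, sq_sqrt (ha _ hn)]
  calc a (1 + m) = csqrtAppr a (1 + m) (1 + m) ^ 2 := hlast.symm
    _ ≤ (csqrtAppr a 1 (1 + m) ^ 2 ^ m) ^ 2 := by
        gcongr
        · exact csqrtAppr_nonneg a _ _
        · exact csqrtAppr_add_le_pow a ha _ m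
    _ = csqrtAppr a 1 (1 + m) ^ 2 ^ (1 + m) := by rw [← pow_mul, add_comm 1 m, pow_succ]

theorem bddAbove_range_csqrtAppr_iff (ha : ∀ n, 1 ≤ n → 0 ≤ a n) :
    BddAbove (Set.range (csqrtAppr a 1)) ↔ ∃ K, 1 ≤ K ∧ ∀ n, 1 ≤ n → a n ≤ K ^ 2 ^ n := by
  constructor
  · rintro ⟨B, hB⟩
    refine ⟨max B 1, le_max_right B 1, fun n hn => ?_⟩
    calc a n ≤ csqrtAppr a 1 n ^ 2 ^ n := le_csqrtAppr_one_pow a ha hn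
      _ ≤ max B 1 ^ 2 ^ n := by
          gcongr
          · exact csqrtAppr_nonneg a 1 n
          · exact (hB ⟨n, rfl⟩).trans (le_max_left B 1)
  · rintro ⟨K, hK, haK⟩
    exact ⟨2 * K ^ 2 ^ 1, Set.forall_mem_range.2 (csqrtAppr_le_two_mul_pow a hK haK)⟩

end

theorem log_le_mul_of_le_pow {x K : ℝ} (hx : 0 ≤ x) (hK : 1 ≤ K) {m : ℕ} (h : x ≤ K ^ m) :
    log x ≤ log K * m := by
  rcases hx.eq_or_lt with rfl | hx
  · rw [log_zero]
    exact mul_nonneg (log_nonneg hK) m.cast_nonneg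
  · calc log x ≤ log (K ^ m) := log_le_log hx h
      _ = log K * m := by rw [log_pow, mul_comm]

theorem le_exp_pow_of_log_le {x C : ℝ} {m : ℕ} (h : log x ≤ C * m) : x ≤ exp C ^ m :=
  calc x ≤ exp (log x) := le_exp_log x
    _ ≤ exp (C * m) := exp_le_exp.2 h
    _ = exp C ^ m := by rw [mul_comm, exp_nat_mul]

theorem exists_log_le_mul_two_pow_iff {a : ℕ → ℝ} (ha : ∀ n, 1 ≤ n → 0 ≤ a n) :
    (∃ C, ∀ n, 1 ≤ n → log (a n) ≤ C * 2 ^ n) ↔ ∃ K, 1 ≤ K ∧ ∀ n, 1 ≤ n → a n ≤ K ^ 2 ^ n := by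
  constructor
  · rintro ⟨C, hC⟩
    refine ⟨max (exp C) 1, le_max_right _ _, fun n hn => ?_⟩
    have hexp : a n ≤ exp C ^ 2 ^ n := le_exp_pow_of_log_le (by exact_mod_cast hC n hn)
    exact hexp.trans (pow_le_pow_left₀ (exp_nonneg C) (le_max_left _ _) _)
  · rintro ⟨K, hK, haK⟩
    exact ⟨log K, fun n hn => by exact_mod_cast log_le_mul_of_le_pow (ha n hn) hK (haK n hn)⟩

/-- Vijayaraghavan's convergence criterion (Hardy, Seshu Aiyar, Wilson 1927):
for nonnegative terms, the continued square root converges iff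
`limsup (log (a n)) / 2^n < ∞`. -/
theorem continued_sqrt_converges_iff (a : ℕ → ℝ) (ha : ∀ n, 1 ≤ n → 0 ≤ a n) :
    (∃ L : ℝ, Tendsto (fun n => csqrtAppr a 1 n) atTop (nhds L)) ↔
      (∃ C : ℝ, ∀ n, 1 ≤ n → Real.log (a n) ≤ C * 2 ^ n) := by
  rw [exists_log_le_mul_two_pow_iff ha, ← bddAbove_range_csqrtAppr_iff a ha]
  exact ⟨fun ⟨_, hL⟩ => hL.bddAbove_range,
    fun hbdd => ⟨_, tendsto_atTop_ciSup (csqrtAppr_mono a 1) hbdd⟩⟩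
end

section
/- Let a : ℕ → ℝ and r : ℕ → ℝ satisfy a n ≥ 0 and 0 < r n ≤ 1 for all n ≥ 1, and suppose the series ∑_{n≥1} (r 1) * (r 2) * ⋯ * (r n) converges. Define the n-th approximant A n = (a 1 + (a 2 + ⋯ + (a n)^(r n) ⋯ )^(r 2))^(r 1) by backward recurrence. Then the sequence (A n) converges to a finite limit if and only if there exists a constant C such that (a n)^((r 1)*(r 2)*⋯*(r n)) ≤ C for all n ≥ 1 (i.e., limsup (a n)^(r 1 ⋯ r n) < ∞). -/
/-!
Write `G = crootAppr a r` and `Q j = r 1 ⋯ r j`. Dropping every term but the last one,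
`a n ^ Q n` is a lower bound for the `n`-th approximant, so bounded approximants force
`a n ^ Q n` to be bounded.
Conversely, if `a j ^ Q j ≤ C` for all `j`, then backward induction on `k` gives
`G (k+1) n ≤ (C * 2 ^ (Q (k+1) + ⋯ + Q n)) ^ (Q k)⁻¹`: both summands of `a (k+1) + G (k+2) n`
are at most `M ^ (Q (k+1))⁻¹` with `M = C * 2 ^ (Q (k+2) + ⋯ + Q n)`, and their sum
`2 * M ^ (Q (k+1))⁻¹ = (2 ^ Q (k+1) * M) ^ (Q (k+1))⁻¹` absorbs the new term `Q (k+1)` into the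
exponent of `2`. For `k = 0` this bounds the approximants by `C * 2 ^ ∑ Q j`, and being
monotone in `n` they converge.
-/

open Filter Real Finset

/-- Backward-recurrence approximant of the continued `rᵢ`-th root:
`crootAppr a r k n = (a k + (a (k+1) + ⋯ + (a n)^(r n) ⋯ )^(r (k+1)))^(r k)`,
with value `0` for `k > n`; real powers (`Real.rpow`) are used. -/
noncomputable def crootAppr (a r : ℕ → ℝ) (k n : ℕ) : ℝ :=
  if h : k > n then 0 else (a k + crootAppr a r (k + 1) n) ^ (r k)
termination_by n + 1 - k
decreasing_by omega

namespace crootAppr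

variable {a r : ℕ → ℝ}

lemma of_lt {k n : ℕ} (h : n < k) : crootAppr a r k n = 0 := by
  rw [crootAppr]; exact dif_pos h

lemma of_le {k n : ℕ} (h : k ≤ n) :
    crootAppr a r k n = (a k + crootAppr a r (k + 1) n) ^ r k := by
  rw [crootAppr]; exact dif_neg (by omega)

lemma nonneg {k n : ℕ} (ha : ∀ j, k ≤ j → 0 ≤ a j) : 0 ≤ crootAppr a r k n := by
  rcases lt_or_ge n k with h | h
  · exact (of_lt h).ge
  · rw [of_le h]
    exact rpow_nonneg (add_nonneg (ha k le_rfl) (nonneg fun j hj => ha j (by omega))) _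
termination_by n + 1 - k

lemma le_succ {k n : ℕ} (ha : ∀ j, k ≤ j → 0 ≤ a j) (hr : ∀ j, k ≤ j → 0 ≤ r j) :
    crootAppr a r k n ≤ crootAppr a r k (n + 1) := by
  rcases lt_or_ge n k with h | h
  · exact (of_lt h).trans_le (nonneg ha)
  · rw [of_le h, of_le (by omega : k ≤ n + 1)]
    have ih := le_succ (k := k + 1) (n := n) (fun j hj => ha j (by omega))
      (fun j hj => hr j (by omega))
    exact rpow_le_rpow (add_nonneg (ha k le_rfl) (nonneg fun j hj => ha j (by omega)))
      (add_le_add_right ih _) (hr k le_rfl)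
termination_by n + 1 - k

lemma monotone {k : ℕ} (ha : ∀ j, k ≤ j → 0 ≤ a j) (hr : ∀ j, k ≤ j → 0 ≤ r j) :
    Monotone (crootAppr a r k) :=
  monotone_nat_of_le_succ fun _ => le_succ ha hr

lemma rpow_prod_le {k n : ℕ} (ha : ∀ j, k ≤ j → 0 ≤ a j) (hr : ∀ j, k ≤ j → 0 ≤ r j) (h : k ≤ n) :
    a n ^ (∏ i ∈ Icc k n, r i) ≤ crootAppr a r k n := by
  rw [of_le h]
  rcases h.eq_or_lt with rfl | hlt
  · rw [of_lt (Nat.lt_succ_self k), add_zero, Icc_self, prod_singleton]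
  have ha' : ∀ j, k + 1 ≤ j → 0 ≤ a j := fun j hj => ha j (by omega)
  have hprod : ∏ i ∈ Icc k n, r i = (∏ i ∈ Icc (k + 1) n, r i) * r k := by
    rw [← mul_prod_Ioc_eq_prod_Icc h, ← Icc_add_one_left_eq_Ioc, mul_comm]
  calc a n ^ (∏ i ∈ Icc k n, r i)
      = (a n ^ (∏ i ∈ Icc (k + 1) n, r i)) ^ r k := by rw [hprod, rpow_mul (ha n h)]
    _ ≤ crootAppr a r (k + 1) n ^ r k :=
        rpow_le_rpow (rpow_nonneg (ha n h) _)
          (rpow_prod_le ha' (fun j hj => hr j (by omega)) hlt) (hr k le_rfl)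
    _ ≤ (a k + crootAppr a r (k + 1) n) ^ r k :=
        rpow_le_rpow (nonneg ha') (le_add_of_nonneg_left (ha k le_rfl)) (hr k le_rfl)
termination_by n + 1 - k

lemma le_rpow_of_rpow_prod_le {C : ℝ} {k n : ℕ} (hr : ∀ j, 1 ≤ j → 0 < r j)
    (ha : ∀ j, k + 1 ≤ j → 0 ≤ a j) (hbd : ∀ j, k + 1 ≤ j → a j ^ (∏ i ∈ Icc 1 j, r i) ≤ C) :
    crootAppr a r (k + 1) n ≤
      (C * 2 ^ ∑ j ∈ Icc (k + 1) n, ∏ i ∈ Icc 1 j, r i) ^ (∏ i ∈ Icc 1 k, r i)⁻¹ := by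
  have hC : 0 ≤ C := (rpow_nonneg (ha _ le_rfl) _).trans (hbd _ le_rfl)
  have hQ (j : ℕ) : 0 < ∏ i ∈ Icc 1 j, r i := prod_pos fun i hi => hr i (mem_Icc.1 hi).1
  have hS (m : ℕ) : 1 ≤ (2 : ℝ) ^ ∑ j ∈ Icc m n, ∏ i ∈ Icc 1 j, r i :=
    one_le_rpow one_le_two (sum_nonneg fun j _ => (hQ j).le)
  rcases lt_or_ge n (k + 1) with h | h
  · rw [of_lt h]
    exact rpow_nonneg (mul_nonneg hC (zero_le_one.trans (hS _))) _
  set M := C * 2 ^ ∑ j ∈ Icc (k + 2) n, ∏ i ∈ Icc 1 j, r i with hMdef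
  have hM : C ≤ M := le_mul_of_one_le_right hC (hS _)
  have ha' : ∀ j, k + 2 ≤ j → 0 ≤ a j := fun j hj => ha j (by omega)
  have htail : crootAppr a r (k + 2) n ≤ M ^ (∏ i ∈ Icc 1 (k + 1), r i)⁻¹ :=
    le_rpow_of_rpow_prod_le hr ha' fun j hj => hbd j (by omega)
  have hhead : a (k + 1) ≤ M ^ (∏ i ∈ Icc 1 (k + 1), r i)⁻¹ :=
    (le_rpow_inv_iff_of_pos (ha _ le_rfl) (hC.trans hM) (hQ _)).2 ((hbd _ le_rfl).trans hM)
  have hsum : ∑ j ∈ Icc (k + 1) n, ∏ i ∈ Icc 1 j, r i =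
      ∏ i ∈ Icc 1 (k + 1), r i + ∑ j ∈ Icc (k + 2) n, ∏ i ∈ Icc 1 j, r i := by
    rw [← add_sum_Ioc_eq_sum_Icc h, ← Icc_add_one_left_eq_Ioc]; rfl
  have hprod : ∏ i ∈ Icc 1 (k + 1), r i = (∏ i ∈ Icc 1 k, r i) * r (k + 1) :=
    prod_Icc_succ_top (by omega) r
  rw [of_le h]
  calc (a (k + 1) + crootAppr a r (k + 1 + 1) n) ^ r (k + 1)
      ≤ (2 * M ^ (∏ i ∈ Icc 1 (k + 1), r i)⁻¹) ^ r (k + 1) :=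
        rpow_le_rpow (add_nonneg (ha _ le_rfl) (nonneg ha')) (by linarith) (hr _ (by omega)).le
    _ = ((2 ^ (∏ i ∈ Icc 1 (k + 1), r i) * M) ^ (∏ i ∈ Icc 1 (k + 1), r i)⁻¹) ^ r (k + 1) := by
        rw [mul_rpow (rpow_nonneg zero_le_two _) (hC.trans hM), ← rpow_mul zero_le_two,
          mul_inv_cancel₀ (hQ _).ne', rpow_one]
    _ = (C * 2 ^ ∑ j ∈ Icc (k + 1) n, ∏ i ∈ Icc 1 j, r i) ^ (∏ i ∈ Icc 1 k, r i)⁻¹ := by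
        rw [← rpow_mul (by positivity), hsum, rpow_add two_pos, hMdef]
        congr 1
        · ring
        · rw [hprod, mul_inv, mul_assoc, inv_mul_cancel₀ (hr _ (by omega)).ne', mul_one]
termination_by n + 1 - k

end crootAppr

/-- Theorem III of Herschfeld (1935): for `a n ≥ 0`, `0 < r n ≤ 1` with
`∑ (r 1)⋯(r n)` convergent, the continued `rᵢ`-th root converges iff
`limsup (a n)^((r 1)⋯(r n)) < ∞`. -/
theorem continued_root_converges_iff (a r : ℕ → ℝ)
    (ha : ∀ n, 1 ≤ n → 0 ≤ a n)
    (hr : ∀ n, 1 ≤ n → 0 < r n ∧ r n ≤ 1)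
    (hsum : Summable fun n => ∏ i ∈ Finset.Icc 1 n, r i) :
    (∃ L : ℝ, Tendsto (fun n => crootAppr a r 1 n) atTop (nhds L)) ↔
      (∃ C : ℝ, ∀ n, 1 ≤ n → (a n) ^ (∏ i ∈ Finset.Icc 1 n, r i) ≤ C) := by
  have hr₀ : ∀ n, 1 ≤ n → 0 ≤ r n := fun n hn => (hr n hn).1.le
  constructor
  · rintro ⟨L, hL⟩
    obtain ⟨C, hC⟩ := hL.bddAbove_range
    exact ⟨C, fun n hn => (crootAppr.rpow_prod_le ha hr₀ hn).trans (hC ⟨n, rfl⟩)⟩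
  · rintro ⟨C, hC⟩
    have hC₀ : 0 ≤ C := (rpow_nonneg (ha 1 le_rfl) _).trans (hC 1 le_rfl)
    have hbound (n : ℕ) : crootAppr a r 1 n ≤ C * 2 ^ ∑' j, ∏ i ∈ Icc 1 j, r i := by
      have := crootAppr.le_rpow_of_rpow_prod_le (k := 0) (n := n) (fun j hj => (hr j hj).1) ha hC
      rw [Icc_eq_empty_of_lt zero_lt_one, prod_empty, inv_one, rpow_one] at this
      refine this.trans (mul_le_mul_of_nonneg_left (rpow_le_rpow_of_exponent_le one_le_two ?_) hC₀)
      exact hsum.sum_le_tsum _ fun j _ => prod_nonneg fun i hi => hr₀ i (mem_Icc.1 hi).1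
    exact ⟨_, tendsto_atTop_ciSup (crootAppr.monotone ha hr₀) ⟨_, Set.forall_mem_range.2 hbound⟩⟩
end

section
/- Define, for each n ≥ 1, the finite nested radical s n = √(1 + 2·√(1 + 3·√(1 + ⋯ + n·√1))); formally s n = F n 1 where F n k = 0 for k > n and F n k = √(1 + (k+1) * F n (k+1)) for k ≤ n (real square roots). Then the sequence (s n) converges and its limit equals 3. -/
open Filter Real

/-- Truncated Ramanujan nested radical: `ramAppr n k = √(1 + (k+1)·ramAppr n (k+1))`
for `k ≤ n`, and `0` for `k > n`; real square roots. -/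
noncomputable def ramAppr (n k : ℕ) : ℝ :=
  if h : k > n then 0 else Real.sqrt (1 + (k + 1) * ramAppr n (k + 1))
termination_by n + 1 - k
decreasing_by omega

lemma ram_nonneg (n k : ℕ) : 0 ≤ ramAppr n k := by
  rw [ramAppr]
  split
  · exact le_refl 0
  · exact Real.sqrt_nonneg _

lemma ram_le (n k : ℕ) : ramAppr n k ≤ (k : ℝ) + 2 := by
  rw [ramAppr]
  split
  · positivity
  · have ih := ram_le n (k + 1)
    have h0 := ram_nonneg n (k + 1)
    have : Real.sqrt (1 + ((k:ℝ) + 1) * ramAppr n (k + 1)) ≤ Real.sqrt (((k:ℝ)+2)^2) := by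
      apply Real.sqrt_le_sqrt
      push_cast at ih ⊢
      nlinarith [Nat.cast_nonneg (α := ℝ) k]
    calc Real.sqrt (1 + ((k:ℕ) + 1 : ℝ) * ramAppr n (k + 1)) ≤ Real.sqrt (((k:ℝ)+2)^2) := by
          exact_mod_cast this
      _ = (k:ℝ) + 2 := Real.sqrt_sq (by positivity)
termination_by n + 1 - k
decreasing_by omega

lemma ram_ge_one (n k : ℕ) (hk : k ≤ n) : 1 ≤ ramAppr n k := by
  rw [ramAppr, dif_neg (by omega)]
  have h0 := ram_nonneg n (k + 1)
  have hpos : (0:ℝ) ≤ ((k:ℕ) + 1 : ℝ) * ramAppr n (k+1) := by positivity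
  have := Real.sqrt_le_sqrt (show (1:ℝ) ≤ 1 + ((k:ℕ) + 1 : ℝ) * ramAppr n (k+1) by linarith)
  simpa [Real.sqrt_one] using this

lemma ram_err (n k : ℕ) (hk : k ≤ n + 1) :
    (k : ℝ) + 2 - ramAppr n k ≤ ((k:ℝ) + 1) * ((k:ℝ) + 2) / ((n:ℝ) + 2) := by
  have hn2 : (0:ℝ) < (n:ℝ) + 2 := by positivity
  by_cases h : k = n + 1
  · subst h
    rw [ramAppr, dif_pos (by omega)]
    rw [le_div_iff₀ hn2]
    push_cast
    ring_nf
    nlinarith [Nat.cast_nonneg (α := ℝ) n]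
  · have hk' : k ≤ n := by omega
    have ih := ram_err n (k + 1) (by omega)
    have h1 := ram_ge_one n k hk'
    have hle := ram_le n k
    have h2 := ram_le n (k + 1)
    have h0 := ram_nonneg n (k + 1)
    have hs : ramAppr n k = Real.sqrt (1 + ((k:ℕ) + 1 : ℝ) * ramAppr n (k + 1)) := by
      rw [ramAppr, dif_neg (by omega)]
    have hsq : (ramAppr n k)^2 = 1 + ((k:ℝ) + 1) * ramAppr n (k + 1) := by
      rw [hs, Real.sq_sqrt (by positivity)]
    push_cast at ih h2
    rw [le_div_iff₀ hn2] at ih ⊢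
    nlinarith [h1, hle, hsq, ih, h2, h0, Nat.cast_nonneg (α := ℝ) k,
      mul_nonneg (sub_nonneg.2 hle) hn2.le]
termination_by n + 1 - k
decreasing_by omega

/-- Ramanujan (1911): `3 = √(1 + 2√(1 + 3√(1 + ⋯)))`, as the limit of the
truncated nested radicals `s n = √(1 + 2·√(1 + 3·√(1 + ⋯ + n·√1)))`. -/
theorem ramanujan_nested_radical_three :
    Tendsto (fun n => ramAppr n 1) atTop (nhds 3) := by
  have hup : ∀ n : ℕ, ramAppr n 1 ≤ 3 := fun n => by
    have := ram_le n 1; norm_num at this; linarith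
  have hlo : ∀ n : ℕ, 3 - 6 / ((n:ℝ) + 2) ≤ ramAppr n 1 := fun n => by
    have := ram_err n 1 (by omega); push_cast at this; linarith
  have h6 : Tendsto (fun n : ℕ => 6 / ((n:ℝ) + 2)) atTop (nhds 0) := by
    apply Tendsto.div_atTop tendsto_const_nhds
    exact tendsto_atTop_add_const_right _ _ tendsto_natCast_atTop_atTop
  have hlim : Tendsto (fun n : ℕ => 3 - 6 / ((n:ℝ) + 2)) atTop (nhds 3) := by
    simpa using tendsto_const_nhds.sub h6
  exact tendsto_of_tendsto_of_tendsto_of_le_of_le hlim tendsto_const_nhds hlo hup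
end

section
/- Define c : ℕ → ℝ by c 1 = √2 and c (n+1) = √(2 + c n) (real square roots). Then the sequence of partial products P n = ∏_{k=1}^{n} (c k / 2) converges, and its limit equals 2/π. -/
/-!
Halving the angle in `sin (2y) = 2 sin y cos y` gives `sinc (2y) = sinc y · cos y`, hence
`sinc x = sinc (x / 2ⁿ) · ∏_{k=1}^n cos (x / 2ᵏ)`; since `sinc` is continuous with `sinc 0 = 1`,
the cosine products converge to `sinc x`. At `x = π/2` the factors are `cos (π / 2^(k+1)) = c k / 2`
by the half-angle formula, and the limit is `sinc (π/2) = 2/π`.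
-/

open Filter Real Finset
open scoped Topology

namespace Real

lemma sinc_two_mul (x : ℝ) : sinc (2 * x) = sinc x * cos x := by
  rcases eq_or_ne x 0 with rfl | hx
  · simp
  rw [sinc_of_ne_zero hx, sinc_of_ne_zero (mul_ne_zero two_ne_zero hx), sin_two_mul]
  field_simp

lemma sinc_eq_sinc_div_two_pow_mul_prod_cos (x : ℝ) (n : ℕ) :
    sinc x = sinc (x / 2 ^ n) * ∏ k ∈ Icc 1 n, cos (x / 2 ^ k) := by
  induction n with
  | zero => simp
  | succ n ih =>
    have halve : x / 2 ^ n = 2 * (x / 2 ^ (n + 1)) := by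
      rw [pow_succ]; field_simp
    rw [ih, halve, sinc_two_mul, prod_Icc_succ_top (by omega)]
    ring

lemma tendsto_prod_cos_div_two_pow (x : ℝ) :
    Tendsto (fun n : ℕ ↦ ∏ k ∈ Icc 1 n, cos (x / 2 ^ k)) atTop (𝓝 (sinc x)) := by
  have h_arg : Tendsto (fun n : ℕ ↦ x / 2 ^ n) atTop (𝓝 0) :=
    tendsto_const_nhds.div_atTop (tendsto_pow_atTop_atTop_of_one_lt one_lt_two)
  have h_sinc : Tendsto (fun n : ℕ ↦ sinc (x / 2 ^ n)) atTop (𝓝 1) :=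
    sinc_zero ▸ (continuous_sinc.tendsto 0).comp h_arg
  have h_ne : ∀ᶠ n in atTop, sinc (x / 2 ^ n) ≠ 0 := h_sinc.eventually_ne one_ne_zero
  refine (h_sinc.inv₀ one_ne_zero |>.const_mul (sinc x)).congr' ?_ |>.mono_right (by simp)
  filter_upwards [h_ne] with n hn
  rw [sinc_eq_sinc_div_two_pow_mul_prod_cos x n]
  field_simp

end Real

lemma eq_sqrtTwoAddSeries_of_succ {c : ℕ → ℝ} (hc1 : c 1 = √2)
    (hc : ∀ n, 1 ≤ n → c (n + 1) = √(2 + c n)) :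
    ∀ n, 1 ≤ n → c n = sqrtTwoAddSeries 0 n := by
  intro n hn
  induction n, hn using Nat.le_induction with
  | base => simpa using hc1
  | succ n hn ih => rw [hc n hn, ih, sqrtTwoAddSeries]

/-- Viète (1593): with `c 1 = √2` and `c (n+1) = √(2 + c n)`, the partial
products `∏_{k=1}^n (c k / 2)` converge to `2/π`. -/
theorem viete_product (c : ℕ → ℝ) (hc1 : c 1 = Real.sqrt 2)
    (hc : ∀ n, 1 ≤ n → c (n + 1) = Real.sqrt (2 + c n)) :
    Tendsto (fun n => ∏ k ∈ Finset.Icc 1 n, (c k / 2)) atTop (nhds (2 / Real.pi)) := by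
  have h_cos : ∀ n, ∏ k ∈ Icc 1 n, (c k / 2) = ∏ k ∈ Icc 1 n, cos (π / 2 / 2 ^ k) := by
    intro n
    refine prod_congr rfl fun k hk ↦ ?_
    rw [div_div, ← pow_succ', cos_pi_over_two_pow,
      eq_sqrtTwoAddSeries_of_succ hc1 hc k (mem_Icc.mp hk).1]
  have h_sinc : sinc (π / 2) = 2 / π := by
    rw [sinc_of_ne_zero (by positivity), sin_pi_div_two, one_div_div]
  simpa only [h_cos, h_sinc] using tendsto_prod_cos_div_two_pow (π / 2)
end

section
/- Define c : ℕ → ℝ by c 1 = √2 and c (n+1) = √(2 + c n) (real square roots). Then the sequence n ↦ 2^(n+1) · √(2 − c n) converges, and its limit equals π. -/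
/-!
The nested radical with `n` twos is `2 cos (π / 2^(n+1))` (`Real.sqrtTwoAddSeries 0 n`, by the
half-angle formula), so `2^(n+1) √(2 - c n) = 2^(n+2) sin (π / 2^(n+2))`. The bounds
`x - x³/6 < sin x < x` at `x = π / 2^(n+2)` squeeze this between `π - 1/4^n` and `π`.
-/

open Filter Real

theorem Real.tendsto_two_pow_mul_sqrt_two_sub_sqrtTwoAddSeries :
    Tendsto (fun n : ℕ => (2 : ℝ) ^ (n + 1) * √(2 - sqrtTwoAddSeries 0 n)) atTop (nhds π) := by
  have h_err : Tendsto (fun n : ℕ => π - 1 / (4 : ℝ) ^ n) atTop (nhds π) := by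
    simpa [one_div_pow] using tendsto_const_nhds.sub
      (tendsto_pow_atTop_nhds_zero_of_lt_one (by norm_num : (0 : ℝ) ≤ 1 / 4) (by norm_num))
  refine tendsto_of_tendsto_of_tendsto_of_le_of_le h_err tendsto_const_nhds (fun n => ?_)
    (fun n => (pi_gt_sqrtTwoAddSeries n).le)
  linarith [pi_lt_sqrtTwoAddSeries n]

theorem eq_sqrtTwoAddSeries_of_succ_eq_sqrt_two_add {c : ℕ → ℝ} (hc1 : c 1 = √2)
    (hc : ∀ n, 1 ≤ n → c (n + 1) = √(2 + c n)) {n : ℕ} (hn : 1 ≤ n) :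
    c n = sqrtTwoAddSeries 0 n := by
  induction n, hn using Nat.le_induction with
  | base => simp [hc1]
  | succ n hn ih => rw [hc n hn, ih, sqrtTwoAddSeries]

/-- Catalan (1842): with `c 1 = √2` and `c (n+1) = √(2 + c n)`, the sequence
`2^(n+1) · √(2 − c n)` converges to `π`. -/
theorem catalan_pi_formula (c : ℕ → ℝ) (hc1 : c 1 = Real.sqrt 2)
    (hc : ∀ n, 1 ≤ n → c (n + 1) = Real.sqrt (2 + c n)) :
    Tendsto (fun n => (2 : ℝ) ^ (n + 1) * Real.sqrt (2 - c n)) atTop (nhds Real.pi) := by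
  refine tendsto_two_pow_mul_sqrt_two_sub_sqrtTwoAddSeries.congr' ?_
  filter_upwards [eventually_ge_atTop 1] with n hn
  rw [eq_sqrtTwoAddSeries_of_succ_eq_sqrt_two_add hc1 hc hn]
end

section
/- For every real number x with x ≠ 0, the sequence of partial products P n = ∏_{k=1}^{n} cos(x / 2^k) converges, and its limit equals (sin x) / x. -/
open Filter Real Finset

lemma euler_key (x : ℝ) : ∀ n : ℕ,
    (∏ k ∈ Finset.Icc 1 n, Real.cos (x / 2 ^ k)) * (2 ^ n * Real.sin (x / 2 ^ n)) = Real.sin x := by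
  intro n
  induction n with
  | zero => simp
  | succ n ih =>
    rw [Finset.prod_Icc_succ_top (by omega)]
    have h2 : x / 2 ^ n = 2 * (x / 2 ^ (n + 1)) := by
      field_simp; ring
    rw [← ih, h2, Real.sin_two_mul]
    ring

/-- Euler (1744): for `x ≠ 0`, `∏_{k=1}^n cos(x/2^k)` converges to `sin x / x`. -/
theorem euler_cosine_product (x : ℝ) (hx : x ≠ 0) :
    Tendsto (fun n => ∏ k ∈ Finset.Icc 1 n, Real.cos (x / 2 ^ k)) atTop
      (nhds (Real.sin x / x)) := by
  set t : ℕ → ℝ := fun n => x / 2 ^ n with ht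
  have htne : ∀ n, t n ≠ 0 := fun n => div_ne_zero hx (by positivity)
  have ht0 : Tendsto t atTop (nhds 0) := by
    have : Tendsto (fun n : ℕ => x * (1 / 2 : ℝ) ^ n) atTop (nhds (x * 0)) :=
      (tendsto_pow_atTop_nhds_zero_of_lt_one (by norm_num) (by norm_num)).const_mul x
    simpa [ht, div_eq_mul_inv, ← inv_pow] using this
  -- sin t / t → 1
  have hslope : Tendsto (fun y : ℝ => Real.sin y / y) (nhdsWithin 0 {0}ᶜ) (nhds 1) := by
    have h := hasDerivAt_iff_tendsto_slope.mp (Real.hasDerivAt_sin 0)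
    simp only [Real.cos_zero] at h
    refine h.congr' ?_
    filter_upwards [self_mem_nhdsWithin] with y hy
    simp [slope, hy, div_eq_inv_mul]
  have ht0' : Tendsto t atTop (nhdsWithin 0 {0}ᶜ) := by
    rw [tendsto_nhdsWithin_iff]
    exact ⟨ht0, Filter.Eventually.of_forall fun n => htne n⟩
  have hsint : Tendsto (fun n => Real.sin (t n) / t n) atTop (nhds 1) := hslope.comp ht0'
  have hinv : Tendsto (fun n => t n / Real.sin (t n)) atTop (nhds 1) := by
    have := hsint.inv₀ one_ne_zero
    simpa [inv_div] using this
  have hmain : Tendsto (fun n => Real.sin x / x * (t n / Real.sin (t n))) atTop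
      (nhds (Real.sin x / x)) := by
    simpa using hinv.const_mul (Real.sin x / x)
  refine hmain.congr' ?_
  have habs : ∀ᶠ n in atTop, |t n| < Real.pi := by
    have : ∀ᶠ y in nhds (0:ℝ), |y| < Real.pi := by
      have := eventually_abs_sub_lt (0:ℝ) Real.pi_pos
      simpa using this
    exact ht0.eventually this
  filter_upwards [habs] with n hn
  have hsne : Real.sin (t n) ≠ 0 := by
    rw [Ne, Real.sin_eq_zero_iff_of_lt_of_lt (by linarith [abs_lt.mp hn |>.1]) (abs_lt.mp hn).2]
    exact htne n
  have hkey := euler_key x n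
  have h2n : (2:ℝ) ^ n * Real.sin (t n) ≠ 0 := mul_ne_zero (by positivity) hsne
  have : (∏ k ∈ Finset.Icc 1 n, Real.cos (x / 2 ^ k)) =
      Real.sin x / (2 ^ n * Real.sin (t n)) := by
    field_simp at hkey ⊢
    linarith [hkey]
  rw [this]
  simp only [ht]
  field_simp
end

section
/- For every real number x with −2 ≤ x ≤ 2, there exists a sequence ε : ℕ → ℝ with ε n ∈ {−1, 1} for all n, such that the finite nested radicals v n = ε 0 · √(2 + ε 1 · √(2 + ⋯ + ε n · √2)) (defined by backward recurrence with innermost radical √2, all real square roots) converge to x as n → ∞. -/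
/-! Write `x = 2 sin ψ₀` with `ψ₀ ∈ [-π/2, π/2]`. On that interval
`√(2 + 2 sin φ) = 2 sin (π/4 + φ/2)`, so a signed radical `ε √(2 + ·)` acts on angles as the
affine map `φ ↦ ε (π/4 + φ/2)`, which contracts by `1/2`. Inverting these maps along the orbit
of `ψ₀` under the tent map `ψ ↦ 2|ψ| - π/2`, with `ε_k` the sign of `ψ_k`, makes the angle of the
`n`-th truncation lie within `π / 2^(n+1)` of `ψ₀`. -/

open Filter Real

/-- Truncated signed nested radical: `sgnNest ε k n = ε k · √(2 + sgnNest ε (k+1) n)`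
for `k ≤ n`, and `0` for `k > n`; so
`sgnNest ε 0 n = ε 0 · √(2 + ε 1 · √(2 + ⋯ + ε n · √2))`. -/
noncomputable def sgnNest (ε : ℕ → ℝ) (k n : ℕ) : ℝ :=
  if h : k > n then 0 else ε k * Real.sqrt (2 + sgnNest ε (k + 1) n)
termination_by n + 1 - k
decreasing_by omega

open Set

lemma sgnNest_of_lt {ε : ℕ → ℝ} {k n : ℕ} (h : n < k) : sgnNest ε k n = 0 := by
  rw [sgnNest, dif_pos h]

lemma sgnNest_of_le {ε : ℕ → ℝ} {k n : ℕ} (h : k ≤ n) :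
    sgnNest ε k n = ε k * √(2 + sgnNest ε (k + 1) n) := by
  rw [sgnNest, dif_neg (not_lt.mpr h)]

lemma sqrt_two_add_two_sin {φ : ℝ} (hφ : φ ∈ Icc (-(π / 2)) (π / 2)) :
    √(2 + 2 * sin φ) = 2 * sin (π / 4 + φ / 2) := by
  obtain ⟨h₁, h₂⟩ := hφ
  have ha : 0 ≤ sin (π / 4 + φ / 2) := sin_nonneg_of_nonneg_of_le_pi (by linarith) (by linarith)
  set a := π / 4 + φ / 2
  have hsin : sin φ = 2 * sin a ^ 2 - 1 := by
    rw [show φ = 2 * a - π / 2 by ring, sin_sub_pi_div_two, cos_two_mul, cos_sq']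
    ring
  rw [hsin, show 2 + 2 * (2 * sin a ^ 2 - 1) = (2 * sin a) ^ 2 by ring, sqrt_sq (by positivity)]

section SignedHalfAngle

variable {s : ℝ} (hs : s = -1 ∨ s = 1)
include hs

lemma signed_half_angle_mem {φ : ℝ} (hφ : φ ∈ Icc (-(π / 2)) (π / 2)) :
    s * (π / 4 + φ / 2) ∈ Icc (-(π / 2)) (π / 2) := by
  obtain ⟨h₁, h₂⟩ := hφ
  rcases hs with rfl | rfl <;> constructor <;> linarith

lemma mul_sqrt_two_add_two_sin {φ : ℝ} (hφ : φ ∈ Icc (-(π / 2)) (π / 2)) :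
    s * √(2 + 2 * sin φ) = 2 * sin (s * (π / 4 + φ / 2)) := by
  rw [sqrt_two_add_two_sin hφ]
  rcases hs with rfl | rfl <;> simp only [neg_one_mul, one_mul, sin_neg, mul_neg]

lemma abs_signed_half_angle_sub (φ ψ : ℝ) :
    |s * (π / 4 + φ / 2) - s * (π / 4 + ψ / 2)| = |φ - ψ| / 2 := by
  rw [← mul_sub, abs_mul, show π / 4 + φ / 2 - (π / 4 + ψ / 2) = (φ - ψ) / 2 by ring, abs_div,
    abs_two]
  rcases hs with rfl | rfl <;> simp

end SignedHalfAngle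

section Convergence

variable {ε ψ : ℕ → ℝ} (hε : ∀ k, ε k = -1 ∨ ε k = 1) (hψ : ∀ k, ψ k ∈ Icc (-(π / 2)) (π / 2))
  (hrec : ∀ k, ψ k = ε k * (π / 4 + ψ (k + 1) / 2))
include hε hψ hrec

lemma exists_sgnNest_eq_two_mul_sin {k n : ℕ} (hk : k ≤ n + 1) :
    ∃ θ ∈ Icc (-(π / 2)) (π / 2),
      sgnNest ε k n = 2 * sin θ ∧ |θ - ψ k| ≤ π / 2 ^ (n + 1 - k) := by
  induction hk using Nat.decreasingInduction with
  | self =>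
    refine ⟨0, ⟨by linarith [pi_pos], by linarith [pi_pos]⟩, by simp [sgnNest_of_lt], ?_⟩
    have := abs_le.mpr (hψ (n + 1))
    rw [zero_sub, abs_neg, Nat.sub_self, pow_zero, div_one]
    linarith [pi_pos]
  | of_succ k hk ih =>
    obtain ⟨θ, hθ, hnest, hdist⟩ := ih
    refine ⟨ε k * (π / 4 + θ / 2), signed_half_angle_mem (hε k) hθ, ?_, ?_⟩
    · rw [sgnNest_of_le (Nat.lt_succ_iff.mp hk), hnest, mul_sqrt_two_add_two_sin (hε k) hθ]
    · rw [hrec k, abs_signed_half_angle_sub (hε k),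
        show n + 1 - k = n + 1 - (k + 1) + 1 by omega, pow_succ, ← div_div]
      gcongr

lemma abs_sgnNest_sub_two_mul_sin_le (n : ℕ) :
    |sgnNest ε 0 n - 2 * sin (ψ 0)| ≤ π * (1 / 2) ^ n := by
  obtain ⟨θ, -, hnest, hdist⟩ := exists_sgnNest_eq_two_mul_sin hε hψ hrec n.succ.zero_le
  calc |sgnNest ε 0 n - 2 * sin (ψ 0)| = 2 * |sin θ - sin (ψ 0)| := by
        rw [hnest, ← mul_sub, abs_mul, abs_two]
    _ ≤ 2 * (π / 2 ^ (n + 1)) := by gcongr; exact (abs_sin_sub_sin_le _ _).trans hdist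
    _ = π * (1 / 2) ^ n := by rw [pow_succ, one_div_pow]; field_simp

lemma tendsto_sgnNest :
    Tendsto (fun n => sgnNest ε 0 n) atTop (nhds (2 * sin (ψ 0))) := by
  refine tendsto_sub_nhds_zero_iff.mp
    (squeeze_zero_norm (abs_sgnNest_sub_two_mul_sin_le hε hψ hrec) ?_)
  simpa using (tendsto_pow_atTop_nhds_zero_of_lt_one (by norm_num : (0 : ℝ) ≤ 1 / 2)
    (by norm_num)).const_mul π

end Convergence

noncomputable def tentMap (ψ : ℝ) : ℝ := 2 * |ψ| - π / 2

lemma tentMap_mem {ψ : ℝ} (hψ : ψ ∈ Icc (-(π / 2)) (π / 2)) :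
    tentMap ψ ∈ Icc (-(π / 2)) (π / 2) := by
  have := abs_le.mpr hψ
  constructor <;> unfold tentMap <;> linarith [abs_nonneg ψ]

lemma sign_mul_tentMap (ψ : ℝ) :
    (if 0 ≤ ψ then 1 else -1) * (π / 4 + tentMap ψ / 2) = ψ := by
  rw [show π / 4 + tentMap ψ / 2 = |ψ| by unfold tentMap; ring]
  split_ifs with h
  · rw [one_mul, abs_of_nonneg h]
  · rw [abs_of_neg (not_le.mp h)]
    ring

lemma exists_signs_of_tentMap_orbit {ψ₀ : ℝ} (hψ₀ : ψ₀ ∈ Icc (-(π / 2)) (π / 2)) :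
    ∃ ε ψ : ℕ → ℝ, ψ 0 = ψ₀ ∧ (∀ k, ε k = -1 ∨ ε k = 1) ∧
      (∀ k, ψ k ∈ Icc (-(π / 2)) (π / 2)) ∧ ∀ k, ψ k = ε k * (π / 4 + ψ (k + 1) / 2) := by
  refine ⟨fun k => if 0 ≤ tentMap^[k] ψ₀ then 1 else -1, fun k => tentMap^[k] ψ₀, rfl,
    fun k => by dsimp only; split_ifs <;> simp,
    fun k => MapsTo.iterate (fun _ => tentMap_mem) k hψ₀, fun k => ?_⟩
  simp only [Function.iterate_succ_apply']
  exact (sign_mul_tentMap _).symm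

/-- Problem 184 of Pólya and Szegő (1925): every `x ∈ [−2, 2]` is the limit of
nested radicals `ε 0 √(2 + ε 1 √(2 + ⋯ + ε n √2))` with each `ε i = ±1`. -/
theorem polya_szego_representation (x : ℝ) (hx₁ : -2 ≤ x) (hx₂ : x ≤ 2) :
    ∃ ε : ℕ → ℝ, (∀ n, ε n = -1 ∨ ε n = 1) ∧
      Tendsto (fun n => sgnNest ε 0 n) atTop (nhds x) := by
  obtain ⟨ε, ψ, hψ₀, hε, hψ, hrec⟩ :=
    exists_signs_of_tentMap_orbit ⟨neg_pi_div_two_le_arcsin (x / 2), arcsin_le_pi_div_two _⟩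
  refine ⟨ε, hε, ?_⟩
  convert tendsto_sgnNest hε hψ hrec
  rw [hψ₀, sin_arcsin (by linarith) (by linarith)]
  ring
end

section
/- Let p be a real number with p > 1 and let a be a real number with a ≥ 0. Define x : ℕ → ℝ by x 0 = 0 and x (n+1) = a + (x n)^p (real power, Real.rpow). Then the sequence (x n) converges to a finite limit if and only if a ≤ ((p−1)^(p−1) / p^p)^(1/(p−1)). -/
/-!
The map `s ↦ s - s ^ p` on `[0, ∞)` attains its maximum, the threshold
`A = ((p - 1) ^ (p - 1) / p ^ p) ^ (1 / (p - 1))`, at the point `t = p ^ (-1 / (p - 1))` where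
`s ↦ s ^ p` has slope `1`. The iterates of `x ↦ a + x ^ p` from `0` increase, so they converge
iff they are bounded. A limit `L` is a fixed point, `a = L - L ^ p ≤ A`; conversely, if `a ≤ A`
then `a + t ^ p ≤ t`, and `t` bounds every iterate.
-/

open Filter Real

section Threshold

variable {p : ℝ}

lemma rpow_add_mul_sub_le_rpow (hp : 1 ≤ p) {s t : ℝ} (hs : 0 ≤ s) (ht : 0 < t) :
    t ^ p + p * t ^ (p - 1) * (s - t) ≤ s ^ p := by
  have htp : 0 < t ^ p := rpow_pos_of_pos ht p
  have hbern : 1 + p * (s / t - 1) ≤ s ^ p / t ^ p := by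
    have := one_add_mul_self_le_rpow_one_add (s := s / t - 1)
      (by linarith [div_nonneg hs ht.le]) hp
    rwa [add_sub_cancel, div_rpow hs ht.le] at this
  rw [le_div_iff₀ htp] at hbern
  calc t ^ p + p * t ^ (p - 1) * (s - t) = (1 + p * (s / t - 1)) * t ^ p := by
        rw [rpow_sub_one ht.ne']; field_simp
    _ ≤ s ^ p := hbern

lemma rpow_sub_one_neg_inv_sub_one (hp : 1 < p) :
    (p ^ (-(1 / (p - 1)))) ^ (p - 1) = p⁻¹ := by
  have hp1 : p - 1 ≠ 0 := by linarith
  rw [← rpow_mul (by linarith), neg_mul, one_div_mul_cancel hp1, rpow_neg_one]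

lemma isGreatest_sub_rpow (hp : 1 < p) :
    IsGreatest ((fun s ↦ s - s ^ p) '' Set.Ici 0)
      (((p - 1) ^ (p - 1) / p ^ p) ^ ((1 : ℝ) / (p - 1))) := by
  have hp0 : 0 < p := by linarith
  have hp1 : 0 < p - 1 := by linarith
  set t := p ^ (-(1 / (p - 1))) with ht_def
  have ht : 0 < t := rpow_pos_of_pos hp0 _
  have hslope : p * t ^ (p - 1) = 1 := by
    rw [rpow_sub_one_neg_inv_sub_one hp, mul_inv_cancel₀ hp0.ne']
  have htp : t ^ p = t / p := by
    rw [rpow_sub_one ht.ne'] at hslope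
    field_simp at hslope ⊢
    linarith
  have hA : ((p - 1) ^ (p - 1) / p ^ p) ^ ((1 : ℝ) / (p - 1)) = t - t ^ p := by
    have e1 : (p - 1) * (1 / (p - 1)) = 1 := by field_simp
    have e2 : p * (1 / (p - 1)) = 1 + 1 / (p - 1) := by field_simp; ring
    rw [div_rpow (rpow_nonneg hp1.le _) (rpow_nonneg hp0.le _), ← rpow_mul hp1.le,
      ← rpow_mul hp0.le, e1, e2, rpow_one, rpow_add hp0, rpow_one, htp, ht_def,
      rpow_neg hp0.le]
    field_simp
  refine ⟨hA ▸ ⟨t, ht.le, rfl⟩, ?_⟩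
  rintro _ ⟨s, hs, rfl⟩
  have := rpow_add_mul_sub_le_rpow hp.le (Set.mem_Ici.mp hs) ht
  rw [hslope] at this
  linarith

end Threshold

section Iteration

variable {p a : ℝ} {x : ℕ → ℝ}

lemma iterate_add_rpow_nonneg (hx0 : x 0 = 0) (hx : ∀ n, x (n + 1) = a + x n ^ p)
    (ha : 0 ≤ a) (n : ℕ) : 0 ≤ x n := by
  induction n with
  | zero => exact hx0.ge
  | succ n ih => rw [hx n]; exact add_nonneg ha (rpow_nonneg ih p)

lemma iterate_add_rpow_le (hx0 : x 0 = 0) (hx : ∀ n, x (n + 1) = a + x n ^ p)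
    (hp : 0 ≤ p) (ha : 0 ≤ a) {s : ℝ} (hs : 0 ≤ s)
    (hsa : a + s ^ p ≤ s) (n : ℕ) : x n ≤ s := by
  induction n with
  | zero => exact hx0 ▸ hs
  | succ n ih =>
    rw [hx n]
    have := rpow_le_rpow (iterate_add_rpow_nonneg hx0 hx ha n) ih hp
    linarith

lemma monotone_iterate_add_rpow (hx0 : x 0 = 0) (hx : ∀ n, x (n + 1) = a + x n ^ p)
    (hp : 0 < p) (ha : 0 ≤ a) : Monotone x := by
  refine monotone_nat_of_le_succ fun n ↦ ?_
  induction n with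
  | zero => rw [hx 0, hx0, zero_rpow hp.ne']; linarith
  | succ n ih =>
    rw [hx n, hx (n + 1)]
    have := rpow_le_rpow (iterate_add_rpow_nonneg hx0 hx ha n) ih hp.le
    linarith

lemma add_rpow_eq_of_tendsto_iterate (hx : ∀ n, x (n + 1) = a + x n ^ p) (hp : 0 ≤ p) {L : ℝ}
    (hL : Tendsto x atTop (nhds L)) : a + L ^ p = L := by
  have hstep : Tendsto (fun n ↦ a + x n ^ p) atTop (nhds (a + L ^ p)) :=
    tendsto_const_nhds.add ((continuousAt_rpow_const L p (Or.inr hp)).tendsto.comp hL)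
  rw [← funext hx] at hstep
  exact tendsto_nhds_unique hstep (hL.comp (tendsto_add_atTop_nat 1))

end Iteration

/-- Jones (1991): for `p > 1`, `a ≥ 0`, the approximants `x 0 = 0`,
`x (n+1) = a + (x n)^p` of the continued `p`-th power with constant terms `a`
converge iff `a ≤ ((p−1)^(p−1)/p^p)^(1/(p−1))`. -/
theorem continued_power_const_converges_iff (p : ℝ) (hp : 1 < p)
    (a : ℝ) (ha : 0 ≤ a) (x : ℕ → ℝ)
    (hx0 : x 0 = 0) (hx : ∀ n, x (n + 1) = a + x n ^ p) :
    (∃ L : ℝ, Tendsto x atTop (nhds L)) ↔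
      a ≤ ((p - 1) ^ (p - 1) / p ^ p) ^ ((1 : ℝ) / (p - 1)) := by
  have hp0 : 0 < p := by linarith
  obtain ⟨⟨t, ht, htA⟩, hmax⟩ := isGreatest_sub_rpow hp
  constructor
  · rintro ⟨L, hL⟩
    have hfix : a + L ^ p = L := add_rpow_eq_of_tendsto_iterate hx hp0.le hL
    have hL0 : 0 ≤ L := ge_of_tendsto' hL (iterate_add_rpow_nonneg hx0 hx ha)
    have hLA : L - L ^ p ≤ _ := hmax ⟨L, hL0, rfl⟩
    linarith
  · intro haA
    have hta : a + t ^ p ≤ t := by linarith [show t - t ^ p = _ from htA]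
    have hbdd : BddAbove (Set.range x) :=
      ⟨t, Set.forall_mem_range.2 (iterate_add_rpow_le hx0 hx hp0.le ha ht hta)⟩
    exact ⟨_, tendsto_atTop_ciSup (monotone_iterate_add_rpow hx0 hx hp0 ha) hbdd⟩
end

section
/- Let p be a real number with p > 1, let a : ℕ → ℝ satisfy a n ≥ 0 for all n, and set R = ((p−1)^(p−1) / p^p)^(1/(p−1)). Define the n-th approximant A n = a 0 + (a 1 + (⋯ + (a n)^p ⋯)^p)^p by backward recurrence: A n = G 0 n where G k n = 0 for k > n and G k n = a k + (G (k+1) n)^p for k ≤ n (real powers, Real.rpow). If there is a constant C such that (a n / R)^(p^n) ≤ C for all n (i.e., the sequence ((a n)/R)^(p^n) is bounded), then the sequence (A n) converges to a finite limit. -/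
/-!
The approximants increase with `n`, so it suffices to bound them. Any `B ≥ 0` with
`a k + B (k+1) ^ p ≤ B k` dominates every approximant starting at `k`. With
`x = p ^ (-1/(p-1))`, the point where `x - x ^ p` attains its maximum `R`, and `c ≥ 0` a
bound for `(a k / R) ^ (p ^ k)`, we have `a k ≤ R c ^ (p⁻¹ ^ k)`, and `B k = x c ^ (p⁻¹ ^ k)`
works because `B (k+1) ^ p = x ^ p c ^ (p⁻¹ ^ k)` and `R + x ^ p = x`.
-/

open Filter Real

/-- Backward-recurrence approximant of the continued `p`-th power:
`cpowAppr a p k n = a k + (cpowAppr a p (k+1) n)^p` for `k ≤ n`, and `0` for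
`k > n`; real powers (`Real.rpow`). -/
noncomputable def cpowAppr (a : ℕ → ℝ) (p : ℝ) (k n : ℕ) : ℝ :=
  if h : k > n then 0 else a k + cpowAppr a p (k + 1) n ^ p
termination_by n + 1 - k
decreasing_by omega

section cpowAppr

variable {a : ℕ → ℝ} {p : ℝ} {k n : ℕ}

lemma cpowAppr_of_lt (h : n < k) : cpowAppr a p k n = 0 := by
  rw [cpowAppr, dif_pos h]

lemma cpowAppr_of_le (h : k ≤ n) : cpowAppr a p k n = a k + cpowAppr a p (k + 1) n ^ p := by
  rw [cpowAppr, dif_neg (not_lt.mpr h)]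

lemma cpowAppr_nonneg (ha : ∀ n, 0 ≤ a n) (k n : ℕ) : 0 ≤ cpowAppr a p k n := by
  rcases lt_or_ge n k with h | h
  · exact (cpowAppr_of_lt h).ge
  · rw [cpowAppr_of_le h]
    exact add_nonneg (ha k) (rpow_nonneg (cpowAppr_nonneg ha (k + 1) n) p)
termination_by n + 1 - k

lemma cpowAppr_le_succ (ha : ∀ n, 0 ≤ a n) (hp : 0 ≤ p) (k n : ℕ) :
    cpowAppr a p k n ≤ cpowAppr a p k (n + 1) := by
  rcases lt_or_ge n k with h | h
  · rw [cpowAppr_of_lt h]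
    exact cpowAppr_nonneg ha k (n + 1)
  · rw [cpowAppr_of_le h, cpowAppr_of_le (Nat.le_succ_of_le h)]
    gcongr
    · exact cpowAppr_nonneg ha (k + 1) n
    · exact cpowAppr_le_succ ha hp (k + 1) n
termination_by n + 1 - k

lemma monotone_cpowAppr (ha : ∀ n, 0 ≤ a n) (hp : 0 ≤ p) (k : ℕ) :
    Monotone (cpowAppr a p k) :=
  monotone_nat_of_le_succ (cpowAppr_le_succ ha hp k)

lemma cpowAppr_le_of_supersolution (ha : ∀ n, 0 ≤ a n) (hp : 0 ≤ p) {B : ℕ → ℝ}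
    (hB₀ : ∀ k, 0 ≤ B k) (hB : ∀ k, a k + B (k + 1) ^ p ≤ B k) (k n : ℕ) :
    cpowAppr a p k n ≤ B k := by
  rcases lt_or_ge n k with h | h
  · rw [cpowAppr_of_lt h]
    exact hB₀ k
  · rw [cpowAppr_of_le h]
    calc a k + cpowAppr a p (k + 1) n ^ p ≤ a k + B (k + 1) ^ p := by
          gcongr
          · exact cpowAppr_nonneg ha (k + 1) n
          · exact cpowAppr_le_of_supersolution ha hp hB₀ hB (k + 1) n
      _ ≤ B k := hB k
termination_by n + 1 - k

lemma exists_tendsto_cpowAppr_of_supersolution (ha : ∀ n, 0 ≤ a n) (hp : 0 ≤ p)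
    {B : ℕ → ℝ} (hB₀ : ∀ k, 0 ≤ B k) (hB : ∀ k, a k + B (k + 1) ^ p ≤ B k) (k : ℕ) :
    ∃ L, Tendsto (cpowAppr a p k) atTop (nhds L) :=
  ⟨_, tendsto_atTop_ciSup (monotone_cpowAppr ha hp k)
    ⟨B k, Set.forall_mem_range.mpr (cpowAppr_le_of_supersolution ha hp hB₀ hB k)⟩⟩

end cpowAppr

noncomputable def continuedPowerRadius (p : ℝ) : ℝ :=
  ((p - 1) ^ (p - 1) / p ^ p) ^ ((1 : ℝ) / (p - 1))

section radius

variable {p : ℝ}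

lemma continuedPowerRadius_pos (hp : 1 < p) : 0 < continuedPowerRadius p := by
  have := sub_pos.mpr hp
  unfold continuedPowerRadius
  positivity

lemma continuedPowerRadius_add_rpow (hp : 1 < p) :
    continuedPowerRadius p + (p ^ (-(1 / (p - 1)))) ^ p = p ^ (-(1 / (p - 1))) := by
  have hp₀ : 0 < p := by linarith
  have hp₁ : 0 < p - 1 := sub_pos.mpr hp
  set x := p ^ (-(1 / (p - 1)))
  have hxp : x ^ p = p ^ (-(p / (p - 1))) := by
    rw [← rpow_mul hp₀.le]
    ring_nf
  have hx : p * x ^ p = x := by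
    have hexp : 1 + -(p / (p - 1)) = -(1 / (p - 1)) := by
      field_simp
      ring
    rw [hxp]
    nth_rw 1 [← rpow_one p]
    rw [← rpow_add hp₀, hexp]
  have hR : continuedPowerRadius p = (p - 1) * x ^ p := by
    rw [continuedPowerRadius, div_rpow (by positivity) (by positivity), ← rpow_mul hp₁.le,
      ← rpow_mul hp₀.le, mul_one_div_cancel hp₁.ne', rpow_one, hxp, rpow_neg hp₀.le,
      mul_one_div, div_eq_mul_inv]
  rw [hR]
  linear_combination hx

end radius

lemma le_mul_rpow_inv_of_div_rpow_le {b R q c : ℝ} (hb : 0 ≤ b) (hR : 0 < R) (hq : 0 < q)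
    (h : (b / R) ^ q ≤ c) : b ≤ R * c ^ q⁻¹ := by
  have hbR : 0 ≤ b / R := div_nonneg hb hR.le
  have : b / R ≤ c ^ q⁻¹ := by
    calc b / R = ((b / R) ^ q) ^ q⁻¹ := (rpow_rpow_inv hbR hq.ne').symm
      _ ≤ c ^ q⁻¹ := by gcongr
  rwa [div_le_iff₀' hR] at this

lemma add_mul_rpow_le_of_le_mul_rpow {p x R c b : ℝ} (hp : p ≠ 0) (hx : 0 ≤ x) (hc : 0 ≤ c)
    (hR : R + x ^ p = x) (k : ℕ) (hb : b ≤ R * c ^ (p⁻¹ ^ k)) :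
    b + (x * c ^ (p⁻¹ ^ (k + 1))) ^ p ≤ x * c ^ (p⁻¹ ^ k) := by
  have hpow : (x * c ^ (p⁻¹ ^ (k + 1))) ^ p = x ^ p * c ^ (p⁻¹ ^ k) := by
    rw [mul_rpow hx (by positivity), ← rpow_mul hc, pow_succ, inv_mul_cancel_right₀ hp]
  calc b + (x * c ^ (p⁻¹ ^ (k + 1))) ^ p ≤ R * c ^ (p⁻¹ ^ k) + x ^ p * c ^ (p⁻¹ ^ k) := by
        rw [hpow]
        gcongr
    _ = x * c ^ (p⁻¹ ^ k) := by rw [← add_mul, hR]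

/-- Jones (1995): for `p > 1` and nonnegative terms, if `((a n)/R)^(p^n)` is
bounded, where `R = ((p−1)^(p−1)/p^p)^(1/(p−1))`, then the continued `p`-th
power converges. -/
theorem continued_power_converges_of_bounded (p : ℝ) (hp : 1 < p)
    (a : ℕ → ℝ) (ha : ∀ n, 0 ≤ a n)
    (hbd : ∃ C : ℝ, ∀ n : ℕ,
      (a n / ((p - 1) ^ (p - 1) / p ^ p) ^ ((1 : ℝ) / (p - 1))) ^ (p ^ n) ≤ C) :
    ∃ L : ℝ, Tendsto (fun n => cpowAppr a p 0 n) atTop (nhds L) := by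
  obtain ⟨C, hC⟩ := hbd
  have hp₀ : 0 < p := by linarith
  set c := max C 0
  set x := p ^ (-(1 / (p - 1)))
  have hbound (k : ℕ) : a k ≤ continuedPowerRadius p * c ^ (p⁻¹ ^ k) := by
    rw [inv_pow]
    exact le_mul_rpow_inv_of_div_rpow_le (ha k) (continuedPowerRadius_pos hp) (by positivity)
      ((hC k).trans (le_max_left C 0))
  exact exists_tendsto_cpowAppr_of_supersolution ha hp₀.le (B := fun k => x * c ^ (p⁻¹ ^ k))
    (fun k => by positivity)
    (fun k => add_mul_rpow_le_of_le_mul_rpow hp₀.ne' (by positivity) (by positivity)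
      (continuedPowerRadius_add_rpow hp) k (hbound k)) 0
end

section
/- Let r be an integer with r > 1 and let a be a real number with a > 0. Then the equation x^r − x − a = 0 has exactly one positive real root L, and the sequence x : ℕ → ℝ defined by x 0 = 0 and x (n+1) = (a + x n)^(1/r) (real r-th root, i.e., Real.rpow with exponent 1/r) converges to L. -/
open Filter Real

private lemma rpow_pow_inv (r : ℕ) (hr : 1 < r) {t : ℝ} (ht : 0 ≤ t) :
    (t ^ r) ^ ((1 : ℝ) / r) = t := by
  have hr0 : (r : ℝ) ≠ 0 := by positivity
  rw [← Real.rpow_natCast t r, ← Real.rpow_mul ht, mul_one_div, div_self hr0,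
    Real.rpow_one]

private lemma strict_on_one (r : ℕ) (hr : 1 < r) {u v : ℝ} (hu : 1 ≤ u) (huv : u < v) :
    u ^ r - u < v ^ r - v := by
  have hkey : (∑ i ∈ Finset.range r, v ^ i * u ^ (r - 1 - i)) * (v - u) = v ^ r - u ^ r :=
    geom_sum₂_mul v u r
  have hv : 1 ≤ v := hu.trans huv.le
  have hsum : (r : ℝ) ≤ ∑ i ∈ Finset.range r, v ^ i * u ^ (r - 1 - i) := by
    calc (r : ℝ) = ∑ _i ∈ Finset.range r, (1 : ℝ) := by simp
    _ ≤ _ := by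
        apply Finset.sum_le_sum
        intro i _
        have h1 : (1:ℝ) ≤ v ^ i := one_le_pow₀ hv
        have h2 : (1:ℝ) ≤ u ^ (r - 1 - i) := one_le_pow₀ hu
        nlinarith
  have h2r : (2 : ℝ) ≤ r := by exact_mod_cast hr
  nlinarith [mul_le_mul_of_nonneg_right hsum (by linarith : (0:ℝ) ≤ v - u)]

/-- Allen (1985): for an integer `r > 1` and `a > 0`, the equation
`x^r − x − a = 0` has exactly one positive real root `L`, and the approximants
`x 0 = 0`, `x (n+1) = (a + x n)^(1/r)` of the continued `r`-th root
`ʳ√(a + ʳ√(a + ⋯))` converge to `L`. -/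
theorem continued_rth_root_const (r : ℕ) (hr : 1 < r) (a : ℝ) (ha : 0 < a)
    (x : ℕ → ℝ) (hx0 : x 0 = 0)
    (hx : ∀ n, x (n + 1) = (a + x n) ^ ((1 : ℝ) / r)) :
    ∃ L : ℝ, 0 < L ∧ L ^ r - L - a = 0 ∧
      (∀ M : ℝ, 0 < M → M ^ r - M - a = 0 → M = L) ∧
      Tendsto x atTop (nhds L) := by
  have hexp : (0 : ℝ) ≤ 1 / r := by positivity
  have h2r : (2 : ℝ) ≤ r := by exact_mod_cast hr
  -- nonnegativity
  have hnn : ∀ n, 0 ≤ x n := by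
    intro n
    induction n with
    | zero => simp [hx0]
    | succ n ih => rw [hx]; exact Real.rpow_nonneg (by linarith) _
  -- upper bound by B = 1 + 2a
  set B : ℝ := 1 + 2 * a with hB
  have hBr : a + B ≤ B ^ r := by
    have := one_add_mul_le_pow (a := 2 * a) (by linarith) r
    simp only [hB]; nlinarith
  have hub : ∀ n, x n ≤ B := by
    intro n
    induction n with
    | zero => rw [hx0]; positivity
    | succ n ih =>
      rw [hx]
      calc (a + x n) ^ ((1:ℝ)/r) ≤ (B ^ r) ^ ((1:ℝ)/r) :=
            Real.rpow_le_rpow (by linarith [hnn n]) (by linarith) hexp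
      _ = B := rpow_pow_inv r hr (by positivity)
  -- monotonicity
  have hmono : Monotone x := by
    apply monotone_nat_of_le_succ
    intro n
    induction n with
    | zero => rw [hx0, hx, hx0]; exact Real.rpow_nonneg (by linarith) _
    | succ n ih =>
      calc x (n+1) = (a + x n) ^ ((1:ℝ)/r) := hx n
      _ ≤ (a + x (n+1)) ^ ((1:ℝ)/r) :=
          Real.rpow_le_rpow (by linarith [hnn n]) (by linarith) hexp
      _ = x (n+1+1) := (hx (n+1)).symm
  -- the limit
  set L : ℝ := ⨆ n, x n with hL
  have hbdd : BddAbove (Set.range x) := ⟨B, by rintro _ ⟨n, rfl⟩; exact hub n⟩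
  have htend : Tendsto x atTop (nhds L) := tendsto_atTop_ciSup hmono hbdd
  have hle : ∀ n, x n ≤ L := fun n => le_ciSup hbdd n
  -- L is a fixed point
  have hLnn : 0 ≤ L := (hnn 0).trans (hle 0)
  have hfix : L = (a + L) ^ ((1:ℝ)/r) := by
    have h1 : Tendsto (fun n => x (n+1)) atTop (nhds L) :=
      htend.comp (tendsto_add_atTop_nat 1)
    have h2 : Tendsto (fun n => (a + x n) ^ ((1:ℝ)/r)) atTop
        (nhds ((a + L) ^ ((1:ℝ)/r))) := by
      have hc : ContinuousAt (fun t : ℝ => t ^ ((1:ℝ)/r)) (a + L) :=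
        Real.continuousAt_rpow_const _ _ (Or.inr hexp)
      exact hc.tendsto.comp ((tendsto_const_nhds.add htend))
    have : (fun n => x (n+1)) = fun n => (a + x n) ^ ((1:ℝ)/r) := funext hx
    rw [this] at h1
    exact tendsto_nhds_unique h1 h2
  have hLpow : L ^ r = a + L := by
    conv_lhs => rw [hfix]
    rw [← Real.rpow_natCast ((a+L) ^ ((1:ℝ)/r)) r, ← Real.rpow_mul (by linarith),
      one_div_mul_cancel (by positivity : (r:ℝ) ≠ 0), Real.rpow_one]
  -- L > 0
  have hx1 : 0 < x 1 := by
    rw [hx, hx0, add_zero]; exact Real.rpow_pos_of_pos ha _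
  have hLpos : 0 < L := lt_of_lt_of_le hx1 (hle 1)
  -- L > 1
  have hLgt1 : 1 < L := by
    by_contra h
    push_neg at h
    have : L ^ r ≤ L := pow_le_of_le_one hLnn h (by omega)
    linarith
  refine ⟨L, hLpos, by linarith, ?_, htend⟩
  intro M hM hMeq
  have hMgt1 : 1 < M := by
    by_contra h
    push_neg at h
    have : M ^ r ≤ M := pow_le_of_le_one hM.le h (by omega)
    linarith
  rcases lt_trichotomy M L with h | h | h
  · exact absurd (strict_on_one r hr hMgt1.le h) (by nlinarith)
  · exact h
  · exact absurd (strict_on_one r hr hLgt1.le h) (by nlinarith)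
end

section
/- Let θ = (1 + √5)/2 (the golden ratio) and define u : ℕ → ℝ by u 1 = 1 and u (n+1) = √(1 + u n) (real square root). Then there exists a real number K > 0 such that the sequence n ↦ (2θ)^n · (θ − u n) converges to K. -/
open Filter Real

set_option maxHeartbeats 1600000 in
/-- Paris (1987): with `θ = (1+√5)/2` and `u 1 = 1`, `u (n+1) = √(1 + u n)`,
the sequence `(2θ)^n (θ − u n)` converges to a positive constant `K`
(the Paris constant). -/
theorem paris_constant (u : ℕ → ℝ) (hu1 : u 1 = 1)
    (hu : ∀ n, 1 ≤ n → u (n + 1) = Real.sqrt (1 + u n)) :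
    ∃ K : ℝ, 0 < K ∧
      Tendsto (fun n => (2 * ((1 + Real.sqrt 5) / 2)) ^ n *
        ((1 + Real.sqrt 5) / 2 - u n)) atTop (nhds K) := by
  set θ : ℝ := (1 + Real.sqrt 5) / 2 with hθdef
  have h5 : Real.sqrt 5 ^ 2 = 5 := Real.sq_sqrt (by norm_num)
  have h5nn : (0:ℝ) ≤ Real.sqrt 5 := Real.sqrt_nonneg 5
  have h5gt : 2 < Real.sqrt 5 := by nlinarith
  have h5lt : Real.sqrt 5 < 3 := by nlinarith
  have hθ1 : 1 < θ := by rw [hθdef]; linarith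
  have hθ2 : θ < 2 := by rw [hθdef]; linarith
  have hθsq : θ ^ 2 = θ + 1 := by rw [hθdef]; field_simp; nlinarith
  -- bounds on u
  have hbah : ∀ n, 1 ≤ n → 1 ≤ u n ∧ u n ≤ θ := by
    intro n hn
    induction n with
    | zero => omega
    | succ k ih =>
      rcases Nat.eq_zero_or_pos k with hk | hk
      · subst hk; rw [hu1]; exact ⟨le_refl 1, by linarith⟩
      · obtain ⟨h1, h2⟩ := ih hk
        rw [hu k hk]
        constructor
        · have h := Real.sqrt_le_sqrt (show (1:ℝ) ≤ 1 + u k by linarith)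
          simpa using h
        · calc Real.sqrt (1 + u k) ≤ Real.sqrt (θ ^ 2) :=
                Real.sqrt_le_sqrt (by linarith)
            _ = θ := Real.sqrt_sq (by linarith)
  -- the error recurrence
  have hrec : ∀ k, 1 ≤ k → θ - u (k+1) = (θ - u k) / (θ + u (k+1)) := by
    intro k hk
    have h1 := (hbah k hk).1
    have h1' := (hbah (k+1) (by omega)).1
    have hsq : u (k+1) ^ 2 = 1 + u k := by
      rw [hu k hk]; exact Real.sq_sqrt (by linarith)
    have hD : 0 < θ + u (k+1) := by linarith
    field_simp
    nlinarith [hsq, hθsq]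
  -- geometric decay of the error
  have hdecay : ∀ k, θ - u (k+1) ≤ (1/2 : ℝ) ^ k := by
    intro k
    induction k with
    | zero => simp [hu1]; linarith
    | succ m ih =>
      have hm1 : 1 ≤ m + 1 := by omega
      have h1' := (hbah (m+2) (by omega)).1
      have h2 := (hbah (m+1) hm1).2
      have hr := hrec (m+1) hm1
      have hD : 2 ≤ θ + u (m+2) := by linarith
      have hnum : 0 ≤ θ - u (m+1) := by linarith
      rw [show m+1+1 = m+2 from rfl] at hr
      rw [show m+1+1 = m+2 from rfl, hr]
      calc (θ - u (m+1)) / (θ + u (m+2)) ≤ (θ - u (m+1)) / 2 := by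
            apply div_le_div_of_nonneg_left hnum (by norm_num) hD
        _ ≤ (1/2 : ℝ) ^ m / 2 := by linarith
        _ = (1/2 : ℝ) ^ (m+1) := by rw [pow_succ]; ring
  -- the shifted normalized error sequence
  set a : ℕ → ℝ := fun n => (2*θ) ^ (n+1) * (θ - u (n+1)) with hadef
  have hanneg : ∀ n, 0 ≤ a n := by
    intro n
    have h2 := (hbah (n+1) (by omega)).2
    exact mul_nonneg (pow_nonneg (by linarith) _) (by linarith)
  have hamono : Monotone a := by
    apply monotone_nat_of_le_succ
    intro k
    have hk1 : 1 ≤ k+1 := by omega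
    have h2 := (hbah (k+2) (by omega)).2
    have h1' := (hbah (k+2) (by omega)).1
    have hD : 0 < θ + u (k+2) := by linarith
    have hr := hrec (k+1) hk1
    have hE : 0 ≤ θ - u (k+1) := by linarith [(hbah (k+1) hk1).2]
    have hP : (0:ℝ) ≤ (2*θ) ^ (k+1) := pow_nonneg (by linarith) _
    have hE' : 0 ≤ θ - u (k+2) := by linarith
    have hED : θ - u (k+1) = (θ - u (k+2)) * (θ + u (k+2)) := by
      rw [show k+1+1 = k+2 from rfl] at hr
      rw [hr]; field_simp
    simp only [hadef]
    rw [show k+1+1 = k+2 from rfl, hED]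
    nlinarith [mul_nonneg (mul_nonneg hP hE') hE', pow_succ (2*θ) (k+1),
      mul_nonneg hP hE']
  -- one-step bound a (k+1) ≤ a k * exp ((1/2)^(k+1))
  have hstep : ∀ k, a (k+1) ≤ a k * Real.exp ((1/2 : ℝ) ^ (k+1)) := by
    intro k
    have hk1 : 1 ≤ k+1 := by omega
    have h2 := (hbah (k+2) (by omega)).2
    have h1' := (hbah (k+2) (by omega)).1
    have hD : 2 ≤ θ + u (k+2) := by linarith
    have hr := hrec (k+1) hk1
    have hE' : 0 ≤ θ - u (k+2) := by linarith
    have hP : (0:ℝ) ≤ (2*θ) ^ (k+1) := pow_nonneg (by linarith) _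
    have ht0 : (0:ℝ) ≤ (1/2 : ℝ) ^ (k+1) := by positivity
    have hdec := hdecay (k+1)
    have hexp : (1/2 : ℝ) ^ (k+1) + 1 ≤ Real.exp ((1/2 : ℝ) ^ (k+1)) :=
      Real.add_one_le_exp _
    have h2θD : 2*θ ≤ (θ + u (k+2)) * Real.exp ((1/2 : ℝ) ^ (k+1)) := by
      rw [show k+1+1 = k+2 from rfl] at hdec
      nlinarith [mul_nonneg (by linarith : (0:ℝ) ≤ θ + u (k+2) - 2) ht0]
    have hED : θ - u (k+1) = (θ - u (k+2)) * (θ + u (k+2)) := by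
      rw [show k+1+1 = k+2 from rfl] at hr
      rw [hr]; field_simp
    simp only [hadef]
    rw [show k+1+1 = k+2 from rfl, hED]
    nlinarith [mul_nonneg hP hE', Real.exp_pos ((1/2 : ℝ) ^ (k+1)),
      pow_succ (2*θ) (k+1)]
  -- boundedness
  have hb : ∀ n, a n * Real.exp ((1/2 : ℝ) ^ n) ≤ a 0 * Real.exp 1 := by
    intro n
    induction n with
    | zero => simp
    | succ m ih =>
      calc a (m+1) * Real.exp ((1/2 : ℝ) ^ (m+1))
          ≤ (a m * Real.exp ((1/2 : ℝ) ^ (m+1))) * Real.exp ((1/2 : ℝ) ^ (m+1)) := by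
            have := hstep m
            nlinarith [Real.exp_pos ((1/2 : ℝ) ^ (m+1))]
        _ = a m * Real.exp ((1/2 : ℝ) ^ m) := by
            rw [mul_assoc, ← Real.exp_add]
            congr 1
            rw [pow_succ]; ring
        _ ≤ a 0 * Real.exp 1 := ih
  have hbdd : ∀ n, a n ≤ a 0 * Real.exp 1 := by
    intro n
    calc a n ≤ a n * Real.exp ((1/2 : ℝ) ^ n) :=
          le_mul_of_one_le_right (hanneg n) (Real.one_le_exp (by positivity))
      _ ≤ a 0 * Real.exp 1 := hb n
  have hbdd' : BddAbove (Set.range a) := by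
    refine ⟨a 0 * Real.exp 1, ?_⟩
    rintro x ⟨n, rfl⟩
    exact hbdd n
  have htend : Tendsto a atTop (nhds (⨆ n, a n)) := tendsto_atTop_ciSup hamono hbdd'
  refine ⟨⨆ n, a n, ?_, ?_⟩
  · have h0 : 0 < a 0 := by
      simp only [hadef, pow_one, zero_add, hu1]
      nlinarith
    exact lt_of_lt_of_le h0 (le_ciSup hbdd' 0)
  · exact (tendsto_add_atTop_iff_nat 1).mp htend
end
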